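/- Let the MPS be in canonical form. Then for every interior bond i ∈ {1,…,N−1}, the squared ℓ²-norm of the wavefunction equals the sum of the squared diagonal entries of Λ^{[i]}: Σ_σ |Ψ(σ)|² = Σ_{α} (Λ^{[i]}_{αα})². In particular, the wavefunction is normalized (Σ_σ |Ψ(σ)|² = 1) if and only if Σ_α (Λ^{[i]}_{αα})² = 1 at any (equivalently, every) interior bond i. -/

import Mathlib

open Matrix

/-- Partial product `Λ⁰ Γ¹ Λ¹ ⋯ Γⁱ Λⁱ` of an MPS; the tensor `Γ i` is the site tensor
of site `i + 1` (sites are numbered `1, …, N`, bonds `0, 1, …, N`). -/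
noncomputable def mpsW {d : ℕ} (χ : ℕ → ℕ)
    (Γ : (i : ℕ) → Fin d → Matrix (Fin (χ i)) (Fin (χ (i + 1))) ℂ)
    (Λ : (i : ℕ) → Matrix (Fin (χ i)) (Fin (χ i)) ℂ) :
    (i : ℕ) → (ℕ → Fin d) → Matrix (Fin (χ 0)) (Fin (χ i)) ℂ
  | 0, _ => Λ 0
  | (i + 1), σ => mpsW χ Γ Λ i σ * Γ i (σ i) * Λ (i + 1)

/-- The MPS wavefunction `Ψ(σ)`: the unique entry (written as the sum of all entries) of the
`1 × 1` matrix `Λ⁰ Γ¹ Λ¹ Γ² Λ² ⋯ Γᴺ Λᴺ` (the bond dimensions satisfy `χ 0 = χ N = 1`). -/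
noncomputable def mpsPsi {d : ℕ} [NeZero d] (N : ℕ) (χ : ℕ → ℕ)
    (Γ : (i : ℕ) → Fin d → Matrix (Fin (χ i)) (Fin (χ (i + 1))) ℂ)
    (Λ : (i : ℕ) → Matrix (Fin (χ i)) (Fin (χ i)) ℂ)
    (σ : Fin N → Fin d) : ℂ :=
  ∑ a, ∑ b, mpsW χ Γ Λ N (fun k => if h : k < N then σ ⟨k, h⟩ else 0) a b

/-- Canonical form: for every site `i + 1` (`i < N`), with `A = Λ i * Γ i s` and
`B = Γ i s * Λ (i+1)`, one has `∑ s, Aᴴ A = 1` and `∑ s, B Bᴴ = 1`. -/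
noncomputable def IsCanonicalMPS {d : ℕ} (N : ℕ) (χ : ℕ → ℕ)
    (Γ : (i : ℕ) → Fin d → Matrix (Fin (χ i)) (Fin (χ (i + 1))) ℂ)
    (Λ : (i : ℕ) → Matrix (Fin (χ i)) (Fin (χ i)) ℂ) : Prop :=
  ∀ i < N,
    (∑ s : Fin d, (Λ i * Γ i s)ᴴ * (Λ i * Γ i s) = 1) ∧
    (∑ s : Fin d, (Γ i s * Λ (i + 1)) * (Γ i s * Λ (i + 1))ᴴ = 1)

/-! Sweeping from the left, the left-canonical conditions show that the left environment
`∑_τ Wᴴ W` of the first `i` sites equals `(Λ i)ᴴ Λ i`. Adding one more site conjugates the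
environment by the `B`-tensors, which preserves its trace by the right-canonical conditions.
At bond `N` the trace of the environment is the squared norm of `Ψ`, since `χ 0 = χ N = 1`. -/

section Matrix

variable {m n : Type*} [Fintype m] [Fintype n]

theorem Matrix.re_trace_conjTranspose_mul_self (A : Matrix m n ℂ) :
    (Aᴴ * A).trace.re = ∑ i, ∑ j, ‖A i j‖ ^ 2 := by
  simp only [trace, diag_apply, mul_apply, conjTranspose_apply, Complex.re_sum,
    RCLike.star_def, Complex.conj_mul', ← Complex.ofReal_pow, Complex.ofReal_re]
  exact Finset.sum_comm

theorem Matrix.re_trace_conjTranspose_mul_self_of_isDiag [DecidableEq n] {A : Matrix n n ℂ}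
    (hA : A.IsDiag) (hre : ∀ i, (A i i).im = 0) :
    (Aᴴ * A).trace.re = ∑ i, (A i i).re ^ 2 := by
  rw [re_trace_conjTranspose_mul_self]
  refine Finset.sum_congr rfl fun i _ => ?_
  rw [Fintype.sum_eq_single i fun j hj => by simp [hA hj.symm], ← Complex.re_add_im (A i i),
    hre i]
  simp

theorem Matrix.trace_sum_conjTranspose_mul_mul {R ι : Type*} [CommSemiring R] [StarRing R]
    [Fintype ι] (X : Matrix m m R) (B : ι → Matrix m n R) :
    (∑ s, (B s)ᴴ * X * B s).trace = (X * ∑ s, B s * (B s)ᴴ).trace := by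
  simp only [trace_sum, Matrix.mul_sum]
  exact Finset.sum_congr rfl fun s _ => by
    rw [Matrix.mul_assoc, trace_mul_comm, Matrix.mul_assoc]

theorem Matrix.sq_norm_sum_sum_of_unique [Unique m] [Unique n] (A : Matrix m n ℂ) :
    ‖∑ i, ∑ j, A i j‖ ^ 2 = (Aᴴ * A).trace.re := by
  simp [re_trace_conjTranspose_mul_self]

end Matrix

theorem Fin.sum_pi_snoc {α M : Type*} [Fintype α] [AddCommMonoid M] (n : ℕ)
    (f : (Fin (n + 1) → α) → M) :
    ∑ σ, f σ = ∑ s, ∑ τ : Fin n → α, f (Fin.snoc τ s) := by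
  rw [← (Fin.snocEquiv fun _ => α).sum_comp, Fintype.sum_prod_type]
  rfl

section MPS

variable {d : ℕ} {χ : ℕ → ℕ}
  (Γ : (i : ℕ) → Fin d → Matrix (Fin (χ i)) (Fin (χ (i + 1))) ℂ)
  (Λ : (i : ℕ) → Matrix (Fin (χ i)) (Fin (χ i)) ℂ)

theorem mpsW_congr : ∀ (n : ℕ) {σ σ' : ℕ → Fin d}, (∀ k < n, σ k = σ' k) →
    mpsW χ Γ Λ n σ = mpsW χ Γ Λ n σ'
  | 0, _, _, _ => rfl
  | n + 1, _, _, h => by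
    rw [mpsW, mpsW, mpsW_congr n fun k hk => h k (by omega), h n (by omega)]

variable [NeZero d]

def padConfig {n : ℕ} (τ : Fin n → Fin d) (k : ℕ) : Fin d :=
  if h : k < n then τ ⟨k, h⟩ else 0

theorem mpsW_padConfig_snoc {n : ℕ} (τ : Fin n → Fin d) (s : Fin d) :
    mpsW χ Γ Λ (n + 1) (padConfig (Fin.snoc τ s)) =
      mpsW χ Γ Λ n (padConfig τ) * (Γ n s * Λ (n + 1)) := by
  have hlast : padConfig (Fin.snoc τ s) n = s := by
    rw [padConfig, dif_pos n.lt_succ_self]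
    exact Fin.snoc_last (α := fun _ => Fin d) s τ
  have hinit : ∀ k < n, padConfig (Fin.snoc τ s) k = padConfig τ k := fun k hk => by
    simpa [padConfig, hk, show k < n + 1 by omega] using
      Fin.snoc_castSucc (α := fun _ => Fin d) s τ ⟨k, hk⟩
  rw [mpsW, mpsW_congr Γ Λ n hinit, hlast, Matrix.mul_assoc]

noncomputable def mpsLeftEnv (n : ℕ) : Matrix (Fin (χ n)) (Fin (χ n)) ℂ :=
  ∑ τ : Fin n → Fin d, (mpsW χ Γ Λ n (padConfig τ))ᴴ * mpsW χ Γ Λ n (padConfig τ)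

theorem mpsLeftEnv_zero : mpsLeftEnv Γ Λ 0 = (Λ 0)ᴴ * Λ 0 := by
  simp [mpsLeftEnv, mpsW]

theorem mpsLeftEnv_succ (n : ℕ) :
    mpsLeftEnv Γ Λ (n + 1) =
      ∑ s, (Γ n s * Λ (n + 1))ᴴ * mpsLeftEnv Γ Λ n * (Γ n s * Λ (n + 1)) := by
  rw [mpsLeftEnv, Fin.sum_pi_snoc]
  simp only [mpsLeftEnv, mpsW_padConfig_snoc, conjTranspose_mul, Matrix.mul_sum,
    Matrix.sum_mul, Matrix.mul_assoc]

variable {Γ Λ} {N : ℕ}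

theorem mpsLeftEnv_eq_of_isCanonical (hcano : IsCanonicalMPS N χ Γ Λ) :
    ∀ n ≤ N, mpsLeftEnv Γ Λ n = (Λ n)ᴴ * Λ n
  | 0, _ => mpsLeftEnv_zero Γ Λ
  | n + 1, hn => by
    have hA := (hcano n (by omega)).1
    rw [mpsLeftEnv_succ, mpsLeftEnv_eq_of_isCanonical hcano n (by omega)]
    calc ∑ s, (Γ n s * Λ (n + 1))ᴴ * ((Λ n)ᴴ * Λ n) * (Γ n s * Λ (n + 1))
        = (Λ (n + 1))ᴴ * (∑ s, (Λ n * Γ n s)ᴴ * (Λ n * Γ n s)) * Λ (n + 1) := by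
          simp only [conjTranspose_mul, Matrix.mul_sum, Matrix.sum_mul, Matrix.mul_assoc]
      _ = (Λ (n + 1))ᴴ * Λ (n + 1) := by rw [hA, Matrix.mul_one]

theorem trace_mpsLeftEnv_eq_of_isCanonical (hcano : IsCanonicalMPS N χ Γ Λ) {i : ℕ}
    (hi : i ≤ N) : (mpsLeftEnv Γ Λ N).trace = (mpsLeftEnv Γ Λ i).trace := by
  induction N, hi using Nat.le_induction with
  | base => rfl
  | succ n hin ih =>
    rw [mpsLeftEnv_succ, trace_sum_conjTranspose_mul_mul, (hcano n (by omega)).2,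
      Matrix.mul_one, ih fun k hk => hcano k (by omega)]

theorem sum_sq_norm_mpsPsi (hχ0 : χ 0 = 1) (hχN : χ N = 1) :
    ∑ σ : Fin N → Fin d, ‖mpsPsi N χ Γ Λ σ‖ ^ 2 = (mpsLeftEnv Γ Λ N).trace.re := by
  have : Unique (Fin (χ 0)) := by rw [hχ0]; infer_instance
  have : Unique (Fin (χ N)) := by rw [hχN]; infer_instance
  simp only [mpsPsi, mpsLeftEnv, trace_sum, Complex.re_sum]
  exact Finset.sum_congr rfl fun σ _ => sq_norm_sum_sum_of_unique _

end MPS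

theorem canonical_mps_norm_eq_sum_sq_singular_values_general
    (N d : ℕ) [NeZero d]
    (χ : ℕ → ℕ) (hχ0 : χ 0 = 1) (hχN : χ N = 1)
    (Γ : (i : ℕ) → Fin d → Matrix (Fin (χ i)) (Fin (χ (i + 1))) ℂ)
    (Λ : (i : ℕ) → Matrix (Fin (χ i)) (Fin (χ i)) ℂ)
    (hΛdiag : ∀ i ≤ N, (Λ i).IsDiag)
    (hΛreal : ∀ i ≤ N, ∀ α, (Λ i α α).im = 0 ∧ 0 ≤ (Λ i α α).re)
    (hcano : IsCanonicalMPS N χ Γ Λ) :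
    (∀ i, 1 ≤ i → i < N →
        ∑ σ : Fin N → Fin d, ‖mpsPsi N χ Γ Λ σ‖ ^ 2 =
          ∑ α : Fin (χ i), ((Λ i α α).re) ^ 2) ∧
      (∀ i, 1 ≤ i → i < N →
        ((∑ σ : Fin N → Fin d, ‖mpsPsi N χ Γ Λ σ‖ ^ 2 = 1) ↔
          ∑ α : Fin (χ i), ((Λ i α α).re) ^ 2 = 1)) := by
  have key : ∀ i ≤ N, ∑ σ : Fin N → Fin d, ‖mpsPsi N χ Γ Λ σ‖ ^ 2 =
      ∑ α : Fin (χ i), ((Λ i α α).re) ^ 2 := fun i hi => by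
    rw [sum_sq_norm_mpsPsi hχ0 hχN, trace_mpsLeftEnv_eq_of_isCanonical hcano hi,
      mpsLeftEnv_eq_of_isCanonical hcano i hi,
      re_trace_conjTranspose_mul_self_of_isDiag (hΛdiag i hi) fun α => (hΛreal i hi α).1]
  exact ⟨fun i _ hi => key i hi.le, fun i _ hi => by rw [key i hi.le]⟩

/-- Schmidt spectrum of a canonical MPS: if the MPS is in canonical form,
then at every interior bond `i ∈ {1, …, N−1}` the squared ℓ²-norm of the wavefunction equals
the sum of the squared diagonal entries of `Λ^{[i]}`; in particular the wavefunction is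
normalized if and only if `∑_α (Λ^{[i]}_{αα})² = 1` at any (equivalently, every) interior
bond. -/
theorem canonical_mps_norm_eq_sum_sq_singular_values
    (N d : ℕ) [NeZero d] (hN : 1 ≤ N)
    (χ : ℕ → ℕ) (hχ0 : χ 0 = 1) (hχN : χ N = 1) (hχpos : ∀ i, 1 ≤ χ i)
    (Γ : (i : ℕ) → Fin d → Matrix (Fin (χ i)) (Fin (χ (i + 1))) ℂ)
    (Λ : (i : ℕ) → Matrix (Fin (χ i)) (Fin (χ i)) ℂ)
    (hΛ0 : Λ 0 = 1) (hΛN : Λ N = 1)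
    (hΛdiag : ∀ i ≤ N, (Λ i).IsDiag)
    (hΛreal : ∀ i ≤ N, ∀ α, (Λ i α α).im = 0 ∧ 0 ≤ (Λ i α α).re)
    (hΛdesc : ∀ i ≤ N, ∀ α β : Fin (χ i), α ≤ β → (Λ i β β).re ≤ (Λ i α α).re)
    (hcano : IsCanonicalMPS N χ Γ Λ) :
    (∀ i, 1 ≤ i → i < N →
        ∑ σ : Fin N → Fin d, ‖mpsPsi N χ Γ Λ σ‖ ^ 2 =
          ∑ α : Fin (χ i), ((Λ i α α).re) ^ 2) ∧
      (∀ i, 1 ≤ i → i < N →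
        ((∑ σ : Fin N → Fin d, ‖mpsPsi N χ Γ Λ σ‖ ^ 2 = 1) ↔
          ∑ α : Fin (χ i), ((Λ i α α).re) ^ 2 = 1)) :=
  canonical_mps_norm_eq_sum_sq_singular_values_general N d χ hχ0 hχN Γ Λ hΛdiag hΛreal hcano
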